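/- Let B ⊆ ℝ^(n+1) be compact, strictly convex, with non-empty interior, let v be a unit vector, and let p_v be orthogonal projection onto v^⊥. Then for every point y in the topological boundary of p_v(B) there is exactly one point x ∈ B with p_v(x) = y, and moreover this x lies in the boundary S = ∂B. -/

import Mathlib

open Metric Set
open scoped RealInnerProductSpace

/-- Orthogonal projection of `ℝ^{n+1}` onto the hyperplane orthogonal to `v`. -/
noncomputable def pv {n : ℕ} (v : EuclideanSpace ℝ (Fin (n + 1))) :
    EuclideanSpace ℝ (Fin (n + 1)) →L[ℝ] ↥((ℝ ∙ v)ᗮ) :=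
  (ℝ ∙ v)ᗮ.orthogonalProjectionOnto

/-- `B` is strictly convex: every open segment between two distinct points of `B`
lies in the interior of `B`. -/
def StrictlyConvexSet {V : Type*} [AddCommGroup V] [Module ℝ V] [TopologicalSpace V]
    (B : Set V) : Prop :=
  ∀ x ∈ B, ∀ y ∈ B, x ≠ y → openSegment ℝ x y ⊆ interior B

/-- Points of `B` projecting to the boundary of `p_v(B)`. -/
def D0 {n : ℕ} (B : Set (EuclideanSpace ℝ (Fin (n + 1)))) (v : EuclideanSpace ℝ (Fin (n + 1))) :
    Set (EuclideanSpace ℝ (Fin (n + 1))) :=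
  {x ∈ B | pv v x ∈ frontier (pv v '' B)}

/-- Upper region of `S = ∂B`: points over the interior of `p_v(B)` maximizing `x·v` on the fiber. -/
def Uplus {n : ℕ} (B : Set (EuclideanSpace ℝ (Fin (n + 1)))) (v : EuclideanSpace ℝ (Fin (n + 1))) :
    Set (EuclideanSpace ℝ (Fin (n + 1))) :=
  {x | x ∈ frontier B ∧ pv v x ∈ interior (pv v '' B) ∧
    ∀ y ∈ B, pv v y = pv v x → ⟪y, v⟫ ≤ ⟪x, v⟫}

/-- Lower region of `S = ∂B`: points over the interior of `p_v(B)` minimizing `x·v` on the fiber. -/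
def Uminus {n : ℕ} (B : Set (EuclideanSpace ℝ (Fin (n + 1)))) (v : EuclideanSpace ℝ (Fin (n + 1))) :
    Set (EuclideanSpace ℝ (Fin (n + 1))) :=
  {x | x ∈ frontier B ∧ pv v x ∈ interior (pv v '' B) ∧
    ∀ y ∈ B, pv v y = pv v x → ⟪x, v⟫ ≤ ⟪y, v⟫}

def Dplus {n : ℕ} (B : Set (EuclideanSpace ℝ (Fin (n + 1)))) (v : EuclideanSpace ℝ (Fin (n + 1))) :
    Set (EuclideanSpace ℝ (Fin (n + 1))) := D0 B v ∪ Uplus B v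

def Dminus {n : ℕ} (B : Set (EuclideanSpace ℝ (Fin (n + 1)))) (v : EuclideanSpace ℝ (Fin (n + 1))) :
    Set (EuclideanSpace ℝ (Fin (n + 1))) := D0 B v ∪ Uminus B v

/-- The median of `S` in direction `v`: midpoints of fiber pairs. -/
def median {n : ℕ} (B : Set (EuclideanSpace ℝ (Fin (n + 1)))) (v : EuclideanSpace ℝ (Fin (n + 1))) :
    Set (EuclideanSpace ℝ (Fin (n + 1))) :=
  {z | ∃ xp ∈ Dplus B v, ∃ xm ∈ Dminus B v, pv v xp = pv v xm ∧ z = midpoint ℝ xp xm}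

/- Since `p_v(B)` is compact, hence closed, some point of `B` lies over `y`. None lies in the
interior of `B`, because `p_v` is an open map. Two distinct points of `B` over `y` would put their
midpoint, which also lies over `y`, in the interior of `B` by strict convexity. -/

theorem IsOpenMap.notMem_interior_of_map_mem_frontier_image {X Y : Type*} [TopologicalSpace X]
    [TopologicalSpace Y] {f : X → Y} (hf : IsOpenMap f) {s : Set X} {x : X}
    (hx : f x ∈ frontier (f '' s)) : x ∉ interior s :=
  fun hxs => hx.2 (hf.image_interior_subset s ⟨x, hxs, rfl⟩)

theorem StrictlyConvexSet.subsingleton_fiber {V W : Type*} [AddCommGroup V] [Module ℝ V]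
    [TopologicalSpace V] [AddCommGroup W] [Module ℝ W] {B : Set V} (hB : StrictlyConvexSet B)
    (f : V →ₗ[ℝ] W) {y : W} (hy : ∀ x ∈ interior B, f x ≠ y) :
    {x ∈ B | f x = y}.Subsingleton := by
  rintro x₀ ⟨hx₀B, hx₀⟩ x₁ ⟨hx₁B, hx₁⟩
  by_contra hne
  refine hy _ (hB x₀ hx₀B x₁ hx₁B hne (midpoint_mem_openSegment x₀ x₁)) ?_
  rw [← f.coe_toAffineMap, f.toAffineMap.map_midpoint, f.coe_toAffineMap, hx₀, hx₁,
    midpoint_self]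

theorem pv_surjective {n : ℕ} (v : EuclideanSpace ℝ (Fin (n + 1))) :
    Function.Surjective (pv v) :=
  fun u => ⟨u, Submodule.orthogonalProjectionOnto_mem_subspace_eq_self u⟩

theorem stmt2_general (n : ℕ) (B : Set (EuclideanSpace ℝ (Fin (n + 1))))
    (hBc : IsCompact B) (hBsc : StrictlyConvexSet B)
    (v : EuclideanSpace ℝ (Fin (n + 1)))
    (y : ↥((ℝ ∙ v)ᗮ)) (hy : y ∈ frontier (pv v '' B)) :
    (∃! x : EuclideanSpace ℝ (Fin (n + 1)), x ∈ B ∧ pv v x = y) ∧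
      ∀ x ∈ B, pv v x = y → x ∈ frontier B := by
  have hopen : IsOpenMap (pv v) := (pv v).isOpenMap (pv_surjective v)
  have hnotint : ∀ x ∈ interior B, pv v x ≠ y := fun x hx hxy =>
    hopen.notMem_interior_of_map_mem_frontier_image (hxy ▸ hy) hx
  obtain ⟨x₀, hx₀B, hx₀⟩ : y ∈ pv v '' B :=
    (hBc.image (pv v).continuous).isClosed.frontier_subset hy
  have hfiber : {x ∈ B | pv v x = y}.Subsingleton :=
    hBsc.subsingleton_fiber (pv v).toLinearMap hnotint
  refine ⟨⟨x₀, ⟨hx₀B, hx₀⟩, fun x hx => hfiber hx ⟨hx₀B, hx₀⟩⟩, fun x hxB hxy => ?_⟩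
  rw [hBc.isClosed.frontier_eq]
  exact ⟨hxB, fun hint => hnotint x hint hxy⟩

theorem stmt2 (n : ℕ) (B : Set (EuclideanSpace ℝ (Fin (n + 1))))
    (hBc : IsCompact B) (hBsc : StrictlyConvexSet B) (hBint : (interior B).Nonempty)
    (v : EuclideanSpace ℝ (Fin (n + 1))) (hv : ‖v‖ = 1)
    (y : ↥((ℝ ∙ v)ᗮ)) (hy : y ∈ frontier (pv v '' B)) :
    (∃! x : EuclideanSpace ℝ (Fin (n + 1)), x ∈ B ∧ pv v x = y) ∧
      ∀ x ∈ B, pv v x = y → x ∈ frontier B :=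
  stmt2_general n B hBc hBsc v y hy
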